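/- X has no proper infinite subsystem: every infinite closed shift-invariant subset Y ⊆ X equals X. -/

import Mathlib

/-- The shift map σ on the full shift `{0,1}^ℤ`, `σ(x)_i = x_{i+1}`. -/
def shift (x : ℤ → Bool) : ℤ → Bool := fun i => x (i + 1)

/-- The iterate `σ^k` of the shift, for `k ∈ ℤ`. -/
def shiftZ (k : ℤ) (x : ℤ → Bool) : ℤ → Bool := fun i => x (i + k)

/-- `wlist n` is the list `[w_0, w_1, …, w_{2n+1}]` of the words of the construction:
`w_0 = 0`, `w_1 = 1`, and for `n ≥ 1`, `a ∈ {0,1}`,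
`w_{2n+a} = w_{2n-2} w_a w_{2n-2} ∏_{k=0}^{2n-1} (w_k^n w_{2n-2})`. -/
def wlist : ℕ → List (List Bool)
  | 0 => [[false], [true]]
  | n + 1 =>
    let prev := wlist n
    let w : ℕ → List Bool := fun k => prev.getD k []
    let base := w (2 * n)
    let tail := (List.range (2 * n + 2)).flatMap
      (fun k => (List.replicate (n + 1) (w k)).flatten ++ base)
    prev ++ [base ++ w 0 ++ base ++ tail, base ++ w 1 ++ base ++ tail]

/-- The word `w_n`. -/
def wrd (n : ℕ) : List Bool := (wlist n).getD n []

/-- The periodic point `u^ℤ` associated to a nonempty word `u`;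
it satisfies `(u^ℤ)_{m|u|+i} = u_i` for all `m ∈ ℤ`, `0 ≤ i < |u|`. -/
def perPt (u : List Bool) : ℤ → Bool := fun i => u.getD ((i % (u.length : ℤ)).toNat) false

/-- The union of the shift orbits of the points `w_n^ℤ`. -/
def Xgen : Set (ℤ → Bool) := {x | ∃ (n : ℕ) (k : ℤ), x = shiftZ k (perPt (wrd n))}

/-- The subshift `X`: the smallest subshift containing the points `w_n^ℤ`,
i.e. the closure of the union of their shift orbits. -/
def XX : Set (ℤ → Bool) := closure Xgen

/-- The word `u` occurs as a (contiguous) subword of the point `x`. -/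
def occursIn (u : List Bool) (x : ℤ → Bool) : Prop :=
  ∃ i : ℤ, ∀ j : ℕ, j < u.length → x (i + (j : ℤ)) = u.getD j false


/-!
Fix a word `P` (in the end `P = w_k^p`) that occurs in every `w_N` with `N > 2m`. The word
`w_{2n+2+a}` consists of copies of `w_{2n}` separated by blocks `w_j^e` with `j ≤ 2n + 1`, and
every long prefix or suffix of a `w_N` contains `P`. By induction on `N`, a `P`-free factor of a
power of `w_N` is therefore, up to margins of bounded length, a factor of a power of some `w_j`
with `j ≤ 2m`. Passing to limits, a point of `X` avoiding `P` lies in one of the finitely many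
shift orbits of `w_j^ℤ`, `j ≤ 2m`. So an infinite subsystem `Y` contains points with arbitrarily
long powers `w_k^p` as factors; closedness and shift invariance then put every `w_k^ℤ` in `Y`.
-/

open List

section Lists

variable {α : Type*} {u v y A B S r : List α} {R : List (List α)} {q : ℕ}

def wpow (u : List α) (q : ℕ) : List α := (replicate q u).flatten

@[simp] lemma wpow_zero (u : List α) : wpow u 0 = [] := rfl

lemma wpow_succ (u : List α) (q : ℕ) : wpow u (q + 1) = u ++ wpow u q := by
  simp [wpow, replicate_succ]

lemma wpow_succ' (u : List α) (q : ℕ) : wpow u (q + 1) = wpow u q ++ u := by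
  simp [wpow, replicate_succ']

@[simp] lemma wpow_one (u : List α) : wpow u 1 = u := by simp [wpow]

lemma wpow_add (u : List α) (q q' : ℕ) : wpow u (q + q') = wpow u q ++ wpow u q' := by
  rw [wpow, wpow, wpow, replicate_add, flatten_append]

lemma wpow_prefix_wpow (u : List α) {q q' : ℕ} (h : q ≤ q') : wpow u q <+: wpow u q' := by
  obtain ⟨d, rfl⟩ := Nat.exists_eq_add_of_le h
  rw [wpow_add]
  exact prefix_append _ _

lemma prefix_or_prefix_of_prefix_wpow (h : y <+: wpow v q) : y <+: v ∨ v <+: y := by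
  cases q with
  | zero => simp_all
  | succ q => exact prefix_or_prefix_of_prefix h (by rw [wpow_succ]; exact prefix_append _ _)

lemma suffix_or_suffix_of_suffix_wpow (h : y <:+ wpow v q) : y <:+ v ∨ v <:+ y := by
  cases q with
  | zero => simp_all
  | succ q => exact suffix_or_suffix_of_suffix h (by rw [wpow_succ']; exact suffix_append _ _)

lemma length_le_of_infix_wpow (hu : u <:+: wpow v q) (hvu : ¬ v <:+: u) :
    u.length ≤ 2 * v.length := by
  induction q with
  | zero => simp_all
  | succ q ih =>
    rw [wpow_succ] at hu
    rcases infix_append_iff.1 hu with h | h | ⟨x, y, rfl, hx, hy⟩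
    · have := h.length_le
      omega
    · exact ih h
    · rcases prefix_or_prefix_of_prefix_wpow hy with hyv | hvy
      · have := hx.length_le
        have := hyv.length_le
        simp only [length_append]
        omega
      · exact absurd (hvy.isInfix.trans (infix_append_right)) hvu

lemma infix_append_append_cases (h : u <:+: A ++ r ++ B) :
    u <:+: A ∨ u <:+: B ∨ ∃ s m t, u = s ++ m ++ t ∧ s <:+ A ∧ t <+: B ∧ m <:+: r ∧
      (s = [] ∨ m <+: r) ∧ (t = [] ∨ m <:+ r) := by
  rcases infix_append_iff.1 h with h | h | ⟨x, t, rfl, hx, ht⟩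
  · rcases infix_append_iff.1 h with h | h | ⟨s, m, rfl, hs, hm⟩
    · exact Or.inl h
    · exact Or.inr (Or.inr ⟨[], u, [], by simp, nil_suffix, nil_prefix, h, Or.inl rfl, Or.inl rfl⟩)
    · exact Or.inr (Or.inr ⟨s, m, [], by simp, hs, nil_prefix, hm.isInfix, Or.inr hm, Or.inl rfl⟩)
  · exact Or.inr (Or.inl h)
  · rcases suffix_or_suffix_of_suffix hx (suffix_append A r) with hxr | ⟨s, rfl⟩
    · exact Or.inr (Or.inr ⟨[], x, t, by simp, nil_suffix, ht, hxr.isInfix, Or.inl rfl, Or.inr hxr⟩)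
    · refine Or.inr (Or.inr ⟨s, r, t, rfl, ?_, ht, infix_refl r, Or.inr (prefix_refl r),
        Or.inr (suffix_refl r)⟩)
      exact suffix_append_self_iff.1 hx

def sepJoin (S : List α) (R : List (List α)) : List α := S ++ R.flatMap (· ++ S)

lemma sepJoin_cons (S r : List α) (R : List (List α)) :
    sepJoin S (r :: R) = S ++ r ++ sepJoin S R := by
  simp [sepJoin]

lemma prefix_sepJoin (S : List α) (R : List (List α)) : S <+: sepJoin S R :=
  prefix_append _ _

lemma suffix_sepJoin (S : List α) (R : List (List α)) : S <:+ sepJoin S R := by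
  induction R with
  | nil => simp [sepJoin]
  | cons r R ih => rw [sepJoin_cons]; exact ih.trans (suffix_append _ _)

lemma infix_sepJoin_of_mem (h : r ∈ R) : r <:+: sepJoin S R := by
  induction R with
  | nil => simp at h
  | cons r' R ih =>
    rw [sepJoin_cons]
    rcases mem_cons.1 h with rfl | h
    · exact infix_append S r _
    · exact (ih h).trans infix_append_right

lemma infix_sepJoin (h : u <:+: sepJoin S R) :
    S <:+: u ∨ u <:+: S ∨ ∃ r ∈ R, u <:+: S ++ r ++ S := by
  induction R with
  | nil => simp_all [sepJoin]
  | cons r R ih =>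
    rw [sepJoin_cons] at h
    rcases infix_append_iff.1 h with h | h | ⟨x, y, rfl, hx, hy⟩
    · exact Or.inr (Or.inr ⟨r, mem_cons_self, h.trans (prefix_append _ _).isInfix⟩)
    · rcases ih h with h | h | ⟨r', hr', h⟩
      · exact Or.inl h
      · exact Or.inr (Or.inl h)
      · exact Or.inr (Or.inr ⟨r', mem_cons_of_mem _ hr', h⟩)
    · rcases prefix_or_prefix_of_prefix hy (prefix_sepJoin S R) with hyS | ⟨z, rfl⟩
      · obtain ⟨s, hs⟩ := hx
        obtain ⟨t, ht⟩ := hyS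
        exact Or.inr (Or.inr ⟨r, mem_cons_self, s, t, by rw [← hs, ← ht]; simp⟩)
      · exact Or.inl ⟨x, z, by simp⟩

lemma exists_sepJoin_eq_wpow (S : List α) (R : List (List α)) (q : ℕ) :
    ∃ R' ⊆ [] :: R, wpow (sepJoin S R) (q + 1) = sepJoin S R' := by
  induction q with
  | zero => exact ⟨R, subset_cons_self _ _, wpow_one _⟩
  | succ q ih =>
    obtain ⟨R', hR', h⟩ := ih
    refine ⟨R' ++ [] :: R, append_subset.2 ⟨hR', Subset.refl _⟩, ?_⟩
    rw [wpow_succ', h]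
    simp [sepJoin]

lemma infix_wpow_sepJoin (h : u <:+: wpow (sepJoin S R) q) :
    S <:+: u ∨ u <:+: S ∨ ∃ r ∈ [] :: R, u <:+: S ++ r ++ S := by
  cases q with
  | zero => simp_all
  | succ q =>
    obtain ⟨R', hR', hq⟩ := exists_sepJoin_eq_wpow S R q
    rw [hq] at h
    rcases infix_sepJoin h with h | h | ⟨r, hr, h⟩
    · exact Or.inl h
    · exact Or.inr (Or.inl h)
    · exact Or.inr (Or.inr ⟨r, hR' hr, h⟩)

end Lists

section Construction

lemma wlist_succ (n : ℕ) : wlist (n + 1) = wlist n ++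
    [(wlist n).getD (2 * n) [] ++ (wlist n).getD 0 [] ++ (wlist n).getD (2 * n) [] ++
      (range (2 * n + 2)).flatMap (fun k => wpow ((wlist n).getD k []) (n + 1) ++
        (wlist n).getD (2 * n) []),
     (wlist n).getD (2 * n) [] ++ (wlist n).getD 1 [] ++ (wlist n).getD (2 * n) [] ++
      (range (2 * n + 2)).flatMap (fun k => wpow ((wlist n).getD k []) (n + 1) ++
        (wlist n).getD (2 * n) [])] := rfl

lemma length_wlist (n : ℕ) : (wlist n).length = 2 * n + 2 := by
  induction n with
  | zero => rfl
  | succ n ih => rw [wlist_succ, length_append, ih]; rfl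

lemma wlist_prefix_wlist {n n' : ℕ} (h : n ≤ n') : wlist n <+: wlist n' := by
  induction n', h using Nat.le_induction with
  | base => exact prefix_refl _
  | succ n' _ ih => exact ih.trans (by rw [wlist_succ]; exact prefix_append _ _)

lemma getD_wlist {n k : ℕ} (hk : k < 2 * n + 2) : (wlist n).getD k [] = wrd k := by
  have key : ∀ {n n'}, n ≤ n' → k < 2 * n + 2 → (wlist n').getD k [] = (wlist n).getD k [] := by
    intro n n' h hk
    obtain ⟨t, ht⟩ := wlist_prefix_wlist h
    rw [← ht, getD_append _ _ _ _ (by rw [length_wlist]; omega)]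
  rcases le_total n k with h | h
  · exact (key h hk).symm
  · exact key h (by omega)

-- The blocks between consecutive copies of `w_{2n}` in `w_{2n+2+a}`, which is the paper's
-- `w_{2n'+a}` for `n' = n + 1`.
def runs (n a : ℕ) : List (List Bool) :=
  wrd a :: (range (2 * n + 2)).map (fun k => wpow (wrd k) (n + 1))

lemma wrd_eq_sepJoin {n a : ℕ} (ha : a ≤ 1) :
    wrd (2 * n + 2 + a) = sepJoin (wrd (2 * n)) (runs n a) := by
  have hN : wrd (2 * n + 2 + a) = (wlist (n + 1)).getD (2 * n + 2 + a) [] :=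
    (getD_wlist (by omega)).symm
  have hprev : ∀ k < 2 * n + 2, (wlist n).getD k [] = wrd k := fun k hk => getD_wlist hk
  rw [hN, wlist_succ, getD_append_right _ _ _ _ (by rw [length_wlist]; omega), length_wlist,
    hprev (2 * n) (by omega), sepJoin, runs, flatMap_cons, flatMap_map]
  have htail : (range (2 * n + 2)).flatMap (fun k => wpow ((wlist n).getD k []) (n + 1) ++
      wrd (2 * n)) = (range (2 * n + 2)).flatMap (fun k => wpow (wrd k) (n + 1) ++ wrd (2 * n)) :=
    flatMap_congr fun k hk => by rw [hprev k (mem_range.1 hk)]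
  rw [htail, hprev 0 (by omega), hprev 1 (by omega)]
  interval_cases a <;> simp

lemma exists_eq_two_mul_add_two {N : ℕ} (h : 2 ≤ N) : ∃ n a, a ≤ 1 ∧ N = 2 * n + 2 + a :=
  ⟨(N - 2) / 2, (N - 2) % 2, by omega, by omega⟩

lemma wpow_infix_wrd_two_mul_add_two {n a j e : ℕ} (ha : a ≤ 1) (hj : j ≤ 2 * n + 1)
    (he : e ≤ n + 1) : wpow (wrd j) e <:+: wrd (2 * n + 2 + a) := by
  rw [wrd_eq_sepJoin ha]
  refine (wpow_prefix_wpow _ he).isInfix.trans (infix_sepJoin_of_mem ?_)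
  exact mem_cons_of_mem _ (mem_map.2 ⟨j, mem_range.2 (by omega), rfl⟩)

lemma wpow_infix_wrd {k p N : ℕ} (h : 2 * (max k p + 1) < N) : wpow (wrd k) p <:+: wrd N := by
  obtain ⟨n, a, ha, rfl⟩ := exists_eq_two_mul_add_two (N := N) (by omega)
  exact wpow_infix_wrd_two_mul_add_two ha (by omega) (by omega)

lemma wrd_ne_nil (N : ℕ) : wrd N ≠ [] := by
  match N with
  | 0 | 1 => simp [wrd, wlist]
  | N + 2 =>
    obtain ⟨n, a, ha, hN⟩ := exists_eq_two_mul_add_two (N := N + 2) (by omega)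
    have h := wpow_infix_wrd_two_mul_add_two (n := n) (j := a) (e := 1) ha (by omega) (by omega)
    rw [← hN, wpow_one] at h
    have : wrd a ≠ [] := by interval_cases a <;> simp [wrd, wlist]
    exact fun h0 => this (infix_nil.1 (h0 ▸ h))

lemma length_wrd_two_mul_add_three (n : ℕ) :
    (wrd (2 * n + 3)).length = (wrd (2 * n + 2)).length := by
  rw [wrd_eq_sepJoin (n := n) (a := 1) le_rfl, ← add_zero (2 * n + 2),
    wrd_eq_sepJoin (a := 0) zero_le_one]
  simp [sepJoin, runs, wrd, wlist]

lemma length_wrd_mono : Monotone fun N => (wrd N).length := by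
  refine monotone_nat_of_le_succ fun N => ?_
  rcases N.even_or_odd' with ⟨n, rfl | rfl⟩
  · cases n with
    | zero => simp [wrd, wlist]
    | succ n => exact (length_wrd_two_mul_add_three n).ge
  · simpa using (wpow_infix_wrd_two_mul_add_two (n := n) (j := 2 * n + 1) (e := 1) (a := 0)
      zero_le_one le_rfl (by omega)).length_le

lemma wrd_prefix_wrd {m n a : ℕ} (ha : a ≤ 1) (h : m ≤ n) :
    wrd (2 * m) <+: wrd (2 * n + 2 + a) := by
  induction n generalizing a with
  | zero =>
    obtain rfl : m = 0 := by omega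
    rw [wrd_eq_sepJoin ha]
    exact prefix_sepJoin _ _
  | succ n ih =>
    rw [wrd_eq_sepJoin ha]
    rcases h.lt_or_eq with h | rfl
    · exact (ih (a := 0) (by omega) (by omega)).trans (prefix_sepJoin _ _)
    · exact prefix_sepJoin _ _

lemma wrd_suffix_wrd {m n a : ℕ} (ha : a ≤ 1) (h : m ≤ n) :
    wrd (2 * m) <:+ wrd (2 * n + 2 + a) := by
  induction n generalizing a with
  | zero =>
    obtain rfl : m = 0 := by omega
    rw [wrd_eq_sepJoin ha]
    exact suffix_sepJoin _ _
  | succ n ih =>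
    rw [wrd_eq_sepJoin ha]
    rcases h.lt_or_eq with h | rfl
    · exact (ih (a := 0) (by omega) (by omega)).trans (suffix_sepJoin _ _)
    · exact suffix_sepJoin _ _

end Construction

def NearPowFactor (K D : ℕ) (u : List Bool) : Prop :=
  ∃ s mid t j q, u = s ++ mid ++ t ∧ s.length ≤ D ∧ t.length ≤ D ∧ j ≤ K ∧
    mid <:+: wpow (wrd j) q

lemma nearPowFactor_append {K D : ℕ} {s t : List Bool} (hs : s.length ≤ D) (ht : t.length ≤ D) :
    NearPowFactor K D (s ++ t) :=
  ⟨s, [], t, 0, 0, by simp, hs, ht, Nat.zero_le K, nil_infix⟩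

lemma nearPowFactor_of_length_le {K D : ℕ} {u : List Bool} (h : u.length ≤ 2 * D) :
    NearPowFactor K D u := by
  rw [← take_append_drop D u]
  exact nearPowFactor_append (by simp) (by simp; omega)

lemma length_wrd_le_of_le_two_mul_add_three {N m : ℕ} (h : N ≤ 2 * m + 3) :
    (wrd N).length ≤ (wrd (2 * m + 2)).length :=
  (length_wrd_mono h).trans_eq (length_wrd_two_mul_add_three m)

section Avoiding

variable {P : List Bool} {m : ℕ}

lemma infix_of_prefix_wrd (hP : ∀ N, 2 * m < N → P <:+: wrd N) {v : List Bool} {N : ℕ}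
    (hv : v <+: wrd N) (hlen : (wrd (2 * m + 2)).length < v.length) : P <:+: v := by
  have hN : 2 * m + 4 ≤ N := by
    by_contra hN
    have := length_wrd_le_of_le_two_mul_add_three (show N ≤ 2 * m + 3 by omega)
    have := hv.length_le
    omega
  obtain ⟨n, a, ha, rfl⟩ := exists_eq_two_mul_add_two (N := N) (by omega)
  have hpre : wrd (2 * (m + 1)) <+: v :=
    prefix_of_prefix_length_le (wrd_prefix_wrd ha (by omega)) hv hlen.le
  exact (hP _ (by omega)).trans hpre.isInfix

lemma infix_of_suffix_wrd (hP : ∀ N, 2 * m < N → P <:+: wrd N) {v : List Bool} {N : ℕ}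
    (hv : v <:+ wrd N) (hlen : (wrd (2 * m + 2)).length < v.length) : P <:+: v := by
  have hN : 2 * m + 4 ≤ N := by
    by_contra hN
    have := length_wrd_le_of_le_two_mul_add_three (show N ≤ 2 * m + 3 by omega)
    have := hv.length_le
    omega
  obtain ⟨n, a, ha, rfl⟩ := exists_eq_two_mul_add_two (N := N) (by omega)
  have hsuf : wrd (2 * (m + 1)) <:+ v :=
    suffix_of_suffix_length_le (wrd_suffix_wrd ha (by omega)) hv hlen.le
  exact (hP _ (by omega)).trans hsuf.isInfix

lemma length_le_of_prefix_wpow_wrd (hP : ∀ N, 2 * m < N → P <:+: wrd N) {y : List Bool} {j e : ℕ}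
    (hj : 2 * m < j) (hy : y <+: wpow (wrd j) e) (hyP : ¬ P <:+: y) :
    y.length ≤ (wrd (2 * m + 2)).length := by
  rcases prefix_or_prefix_of_prefix_wpow hy with h | h
  · by_contra hlt
    exact hyP (infix_of_prefix_wrd hP h (by omega))
  · exact absurd ((hP j hj).trans h.isInfix) hyP

lemma length_le_of_suffix_wpow_wrd (hP : ∀ N, 2 * m < N → P <:+: wrd N) {y : List Bool} {j e : ℕ}
    (hj : 2 * m < j) (hy : y <:+ wpow (wrd j) e) (hyP : ¬ P <:+: y) :
    y.length ≤ (wrd (2 * m + 2)).length := by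
  rcases suffix_or_suffix_of_suffix_wpow hy with h | h
  · by_contra hlt
    exact hyP (infix_of_suffix_wrd hP h (by omega))
  · exact absurd ((hP j hj).trans h.isInfix) hyP

/- The margins inside the copies of `w_n` are short since long prefixes and suffixes of the
words `w_N` contain `P`; for `j > 2m` a `P`-free factor cannot contain `w_j`, so a part of it that
is a prefix or suffix of `w_j^e` is short as well. -/
lemma nearPowFactor_of_infix_frame (hP : ∀ N, 2 * m < N → P <:+: wrd N) 
    {u : List Bool} {n j e : ℕ}
    (hu : u <:+: wrd n ++ wpow (wrd j) e ++ wrd n) (huP : ¬ P <:+: u)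
    (ih_n : ∀ u, u <:+: wrd n → ¬ P <:+: u →
      NearPowFactor (2 * m) (2 * (wrd (2 * m + 2)).length) u)
    (ih_j : ∀ u, u <:+: wpow (wrd j) e → ¬ P <:+: u →
      NearPowFactor (2 * m) (2 * (wrd (2 * m + 2)).length) u) :
    NearPowFactor (2 * m) (2 * (wrd (2 * m + 2)).length) u := by
  rcases infix_append_append_cases hu with h | h | ⟨s, mid, t, rfl, hs, ht, hmid, hs', ht'⟩
  · exact ih_n u h huP
  · exact ih_n u h huP
  have avoid : ∀ {v}, v <:+: s ++ mid ++ t → ¬ P <:+: v := fun hv hPv => huP (hPv.trans hv)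
  have hsC : s.length ≤ (wrd (2 * m + 2)).length := by
    by_contra hlt
    exact avoid ((prefix_append _ _).isInfix.trans (prefix_append _ _).isInfix)
      (infix_of_suffix_wrd hP hs (by omega))
  have htC : t.length ≤ (wrd (2 * m + 2)).length := by
    by_contra hlt
    exact avoid infix_append_right (infix_of_prefix_wrd hP ht (by omega))
  by_cases hj : j ≤ 2 * m
  · exact ⟨s, mid, t, j, e, rfl, by omega, by omega, hj, hmid⟩
  rw [not_le] at hj
  rcases hs' with rfl | hpre
  · rcases ht' with rfl | hsuf
    · simpa using ih_j mid hmid (by simpa using huP)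
    · have := length_le_of_suffix_wpow_wrd hP hj hsuf (avoid (infix_append [] mid t))
      rw [nil_append, ← nil_append (mid ++ t)]
      exact nearPowFactor_append (by simp) (by simp; omega)
  · have := length_le_of_prefix_wpow_wrd hP hj hpre (avoid (infix_append s mid t))
    exact nearPowFactor_append (by simp; omega) (by omega)

theorem nearPowFactor_of_infix_wpow_wrd (hP : ∀ N, 2 * m < N → P <:+: wrd N) (N q : ℕ)
    {u : List Bool} (hu : u <:+: wpow (wrd N) q) (huP : ¬ P <:+: u) :
    NearPowFactor (2 * m) (2 * (wrd (2 * m + 2)).length) u := by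
  induction N using Nat.strong_induction_on generalizing q u with
  | _ N ih => ?_
  by_cases hN : N ≤ 2 * m
  · exact ⟨[], u, [], N, q, by simp, by simp, by simp, hN, hu⟩
  by_cases hN' : N ≤ 2 * m + 3
  · refine nearPowFactor_of_length_le ((length_le_of_infix_wpow hu
      fun h => huP ((hP N (by omega)).trans h)).trans ?_)
    have := length_wrd_le_of_le_two_mul_add_three hN'
    omega
  obtain ⟨n, a, ha, rfl⟩ := exists_eq_two_mul_add_two (N := N) (by omega)
  rw [wrd_eq_sepJoin ha] at hu
  rcases infix_wpow_sepJoin hu with h | h | ⟨r, hr, h⟩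
  · exact absurd ((hP _ (by omega)).trans h) huP
  · exact ih (2 * n) (by omega) 1 (by simpa using h) huP
  obtain ⟨j, e, hj, rfl⟩ : ∃ j e, j < 2 * n + 2 + a ∧ r = wpow (wrd j) e := by
    simp only [runs, mem_cons, mem_map, mem_range] at hr
    rcases hr with rfl | rfl | ⟨j, hj, rfl⟩
    · exact ⟨0, 0, by omega, rfl⟩
    · exact ⟨a, 1, by omega, (wpow_one _).symm⟩
    · exact ⟨j, n + 1, by omega, rfl⟩
  exact nearPowFactor_of_infix_frame hP h huP
    (fun v hv hvP => ih (2 * n) (by omega) 1 (by simpa using hv) hvP)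
    (fun v hv hvP => ih j hj e hv hvP)

end Avoiding

section Points

def window (x : ℤ → Bool) (a : ℤ) (L : ℕ) : List Bool := (range L).map fun r : ℕ => x (a + r)

variable {x y : ℤ → Bool} {u v : List Bool} {a b : ℤ} {L : ℕ}

@[simp] lemma length_window (x : ℤ → Bool) (a : ℤ) (L : ℕ) : (window x a L).length = L := by
  simp [window]

lemma window_add (x : ℤ → Bool) (a : ℤ) (L M : ℕ) :
    window x a (L + M) = window x a L ++ window x (a + L) M := by
  simp only [window, range_add, map_append, map_map]
  congr 1
  exact map_congr_left fun r _ => by simp [add_assoc]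

lemma window_shiftZ (c : ℤ) (x : ℤ → Bool) (a : ℤ) (L : ℕ) :
    window (shiftZ c x) a L = window x (a + c) L :=
  map_congr_left fun r _ => by simp only [shiftZ, add_right_comm]

lemma window_congr (h : Set.EqOn x y (Set.Ico a (a + L))) : window x a L = window y a L :=
  map_congr_left fun r hr => h ⟨by omega, by have := mem_range.1 hr; omega⟩

lemma window_eq_window_iff :
    window x a L = window y b L ↔ Set.EqOn x (shiftZ (b - a) y) (Set.Ico a (a + L)) := by
  refine map_inj_left.trans ⟨fun h i ⟨hi₁, hi₂⟩ => ?_, fun h r hr => ?_⟩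
  · obtain ⟨r, rfl⟩ : ∃ r : ℕ, i = a + r := ⟨(i - a).toNat, by omega⟩
    show x (a + r) = y (a + r + (b - a))
    rw [h r (mem_range.2 (by omega))]
    congr 1
    ring
  · have hr := mem_range.1 hr
    rw [h (show a + (r : ℤ) ∈ Set.Ico a (a + L) from ⟨by omega, by omega⟩)]
    show y (a + r + (b - a)) = y (b + r)
    congr 1
    ring

lemma window_append_eq {s m t : List Bool} (h : window x a L = s ++ m ++ t) :
    window x (a + s.length) m.length = m := by
  have hL := congrArg length h
  simp only [length_append, length_window] at hL
  rw [hL, window_add, window_add] at h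
  exact (append_inj (append_inj' h (by simp)).1 (by simp)).2

lemma exists_window_eq_of_infix (h : u <:+: window x a L) :
    ∃ b, a ≤ b ∧ b + u.length ≤ a + L ∧ window x b u.length = u := by
  obtain ⟨s, t, h⟩ := h
  have hL := congrArg length h
  simp only [length_append, length_window] at hL
  exact ⟨a + s.length, by omega, by omega, window_append_eq h.symm⟩

lemma occursIn_iff_window : occursIn u x ↔ ∃ i, window x i u.length = u := by
  refine exists_congr fun i => ⟨fun h => ext_getElem (by simp) fun r hr _ => ?_,
    fun h r hr => ?_⟩
  · simp only [window, getElem_map, getElem_range]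
    rw [h r (by simpa using hr), getD_eq_getElem]
  · rw [← h]
    simp [window, hr]

lemma occursIn_of_infix_window (h : u <:+: window x a L) : occursIn u x := by
  obtain ⟨b, -, -, hb⟩ := exists_window_eq_of_infix h
  exact occursIn_iff_window.2 ⟨b, hb⟩

lemma window_perPt_add_mul (v : List Bool) (a n : ℤ) (L : ℕ) :
    window (perPt v) (a + n * v.length) L = window (perPt v) a L :=
  map_congr_left fun r _ => by simp [perPt, add_right_comm]

lemma window_perPt_length (v : List Bool) : window (perPt v) 0 v.length = v :=
  ext_getElem (by simp) fun r hr _ => by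
    simp only [window, getElem_map, getElem_range, perPt, zero_add]
    rw [← Int.natCast_emod, Int.toNat_natCast, Nat.mod_eq_of_lt (by simpa using hr),
      getD_eq_getElem]

lemma window_perPt_mul (v : List Bool) (q : ℕ) :
    window (perPt v) 0 (q * v.length) = wpow v q := by
  induction q with
  | zero => simp [window]
  | succ q ih =>
    have h := window_perPt_add_mul v 0 q v.length
    rw [zero_add] at h
    rw [add_mul, one_mul, window_add, ih, Nat.cast_mul, zero_add, h, window_perPt_length,
      wpow_succ']

lemma exists_window_perPt_eq_of_infix_wpow {q : ℕ} (h : u <:+: wpow v q) :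
    ∃ d, window (perPt v) d u.length = u := by
  rw [← window_perPt_mul] at h
  obtain ⟨d, -, -, hd⟩ := exists_window_eq_of_infix h
  exact ⟨d, hd⟩

lemma window_perPt_infix_wpow (hv : v ≠ []) (a : ℤ) (L : ℕ) :
    window (perPt v) a L <:+: wpow v (L + 1) := by
  have hn : (0 : ℤ) < v.length := by simpa [length_pos_iff] using hv
  obtain ⟨o, ho⟩ : ∃ o : ℕ, (o : ℤ) = a % v.length := ⟨(a % v.length).toNat,
    Int.toNat_of_nonneg (Int.emod_nonneg _ hn.ne')⟩
  have hov : (o : ℤ) < v.length := ho ▸ Int.emod_lt_of_pos _ hn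
  have ha : a = o + a / v.length * v.length := by rw [ho, Int.emod_add_ediv_mul]
  obtain ⟨e, he⟩ : ∃ e, (L + 1) * v.length = o + L + e := by
    have : L ≤ L * v.length := Nat.le_mul_of_pos_right L (by omega)
    exact ⟨(L + 1) * v.length - o - L, by rw [add_mul]; omega⟩
  rw [ha, window_perPt_add_mul, ← window_perPt_mul, he, window_add, window_add]
  simp

end Points

lemma mem_closure_iff_eqOn {S : Set (ℤ → Bool)} {x : ℤ → Bool} :
    x ∈ closure S ↔ ∀ (a : ℤ) (L : ℕ), ∃ y ∈ S, Set.EqOn y x (Set.Ico a (a + L)) := by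
  constructor
  · intro hx a L
    have hopen : IsOpen {y : ℤ → Bool | Set.EqOn y x (Set.Ico a (a + L))} := by
      have : {y : ℤ → Bool | Set.EqOn y x (Set.Ico a (a + L))} =
          ⋂ i ∈ Finset.Ico a (a + L), (fun y : ℤ → Bool => y i) ⁻¹' {x i} := by
        ext y; simp [Set.EqOn]
      rw [this]
      exact isOpen_biInter_finset fun i _ =>
        (continuous_apply i).isOpen_preimage _ (isOpen_discrete _)
    obtain ⟨y, hy, hyS⟩ := mem_closure_iff.1 hx _ hopen (Set.eqOn_refl _ _)
    exact ⟨y, hyS, hy⟩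
  · intro h
    choose y hyS hy using fun t : ℕ => h (-t) (2 * t)
    refine mem_closure_of_tendsto (b := Filter.atTop) ?_ (Filter.Eventually.of_forall hyS)
    refine tendsto_pi_nhds.2 fun i => ?_
    rw [nhds_discrete, Filter.tendsto_pure]
    filter_upwards [Filter.eventually_gt_atTop i.natAbs] with t ht
    exact hy t ⟨by omega, by omega⟩

def periodicOrbits (K : ℕ) : Set (ℤ → Bool) :=
  ⋃ j ≤ K, Set.range fun c : ℤ => shiftZ c (perPt (wrd j))

lemma shiftZ_perPt_emod (v : List Bool) (c : ℤ) :
    shiftZ c (perPt v) = shiftZ (c % v.length) (perPt v) := by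
  funext i
  simp [shiftZ, perPt]

lemma finite_periodicOrbits (K : ℕ) : (periodicOrbits K).Finite := by
  refine (Set.finite_le_nat K).biUnion fun j _ => ?_
  have hn : (0 : ℤ) < (wrd j).length := by simpa [length_pos_iff] using wrd_ne_nil j
  refine ((Set.finite_Ico 0 ((wrd j).length : ℤ)).image
    fun c => shiftZ c (perPt (wrd j))).subset ?_
  rintro _ ⟨c, rfl⟩
  exact ⟨c % (wrd j).length, ⟨Int.emod_nonneg _ hn.ne', Int.emod_lt_of_pos _ hn⟩,
    (shiftZ_perPt_emod _ c).symm⟩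

theorem mem_periodicOrbits_of_not_occursIn {P : List Bool} {m : ℕ}
    (hP : ∀ N, 2 * m < N → P <:+: wrd N) {x : ℤ → Bool} (hx : x ∈ XX) (hxP : ¬ occursIn P x) :
    x ∈ periodicOrbits (2 * m) := by
  rw [← (finite_periodicOrbits _).isClosed.closure_eq, mem_closure_iff_eqOn]
  intro a L
  set D := 2 * (wrd (2 * m + 2)).length
  obtain ⟨_, ⟨N, c, rfl⟩, hz⟩ := mem_closure_iff_eqOn.1 hx (a - D) (L + 2 * D)
  have hw : window x (a - D) (L + 2 * D) <:+: wpow (wrd N) (L + 2 * D + 1) := by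
    rw [window_congr hz.symm, window_shiftZ]
    exact window_perPt_infix_wpow (wrd_ne_nil N) _ _
  obtain ⟨s, mid, t, j, q, hdec, hs, ht, hj, hmid⟩ :=
    nearPowFactor_of_infix_wpow_wrd hP N _ hw fun h => hxP (occursIn_of_infix_window h)
  obtain ⟨d, hd⟩ := exists_window_perPt_eq_of_infix_wpow hmid
  have hlen := congrArg length hdec
  simp only [length_append, length_window] at hlen
  have hagree := window_eq_window_iff.1 ((window_append_eq hdec).trans hd.symm)
  refine ⟨_, Set.mem_biUnion hj ⟨_, rfl⟩, (hagree.mono (Set.Ico_subset_Ico ?_ ?_)).symm⟩ <;> omega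

lemma exists_occursIn_of_infinite {P : List Bool} {m : ℕ} (hP : ∀ N, 2 * m < N → P <:+: wrd N)
    {Y : Set (ℤ → Bool)} (hYX : Y ⊆ XX) (hinf : Y.Infinite) : ∃ y ∈ Y, occursIn P y := by
  by_contra! h
  exact hinf ((finite_periodicOrbits (2 * m)).subset fun y hy =>
    mem_periodicOrbits_of_not_occursIn hP (hYX hy) (h y hy))

lemma perPt_mem_of_forall_occursIn {Y : Set (ℤ → Bool)} (hcl : IsClosed Y)
    (hinv : ∀ n : ℤ, shiftZ n '' Y ⊆ Y) {v : List Bool} (hv : v ≠ [])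
    (h : ∀ q, ∃ y ∈ Y, occursIn (wpow v q) y) : perPt v ∈ Y := by
  rw [← hcl.closure_eq, mem_closure_iff_eqOn]
  intro a L
  obtain ⟨y, hyY, hy⟩ := h (L + 1)
  obtain ⟨i, hi⟩ := occursIn_iff_window.1 hy
  obtain ⟨b, -, -, hb⟩ := exists_window_eq_of_infix (hi ▸ window_perPt_infix_wpow hv a L)
  rw [length_window] at hb
  exact ⟨shiftZ (b - a) y, hinv _ ⟨y, hyY, rfl⟩, (window_eq_window_iff.1 hb.symm).symm⟩

/-- `X` has no proper infinite subsystem: every infinite closed shift-invariant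
subset `Y ⊆ X` equals `X`. -/
theorem stmt11 (Y : Set (ℤ → Bool)) (hYX : Y ⊆ XX) (hcl : IsClosed Y)
    (hinv : ∀ n : ℤ, shiftZ n '' Y ⊆ Y) (hinf : Y.Infinite) :
    Y = XX := by
  have hper : ∀ n, perPt (wrd n) ∈ Y := fun n =>
    perPt_mem_of_forall_occursIn hcl hinv (wrd_ne_nil n) fun q =>
      exists_occursIn_of_infinite (fun N hN => wpow_infix_wrd (k := n) (p := q) hN) hYX hinf
  have hgen : Xgen ⊆ Y := by
    rintro _ ⟨n, c, rfl⟩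
    exact hinv c ⟨_, hper n, rfl⟩
  exact hYX.antisymm (closure_minimal hgen hcl)
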